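/- Let c ∈ ℝ³ and c₀ ∈ ℝ with ‖c‖² - c₀² = -1. Then there do not exist f, b ∈ ℝ³ satisfying simultaneously c₀ f + b × c = 0, f · c = 0, f · b = 0, and ‖f‖² - ‖b‖² = 1. -/
import Mathlib


open Matrix

theorem stmt13 (c : Fin 3 → ℝ) (c₀ : ℝ) (h : c ⬝ᵥ c - c₀ ^ 2 = -1) :
    ¬ ∃ f b : Fin 3 → ℝ,
      c₀ • f + crossProduct b c = 0 ∧ f ⬝ᵥ c = 0 ∧ f ⬝ᵥ b = 0 ∧
        f ⬝ᵥ f - b ⬝ᵥ b = 1 := by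
  rintro ⟨f, b, h1, h2, h3, h4⟩
  have e0 := congrFun h1 0
  have e1 := congrFun h1 1
  have e2 := congrFun h1 2
  simp [crossProduct, dotProduct, Fin.sum_univ_three] at *
  have key : c₀ ^ 2 + (b 0 * b 0 + b 1 * b 1 + b 2 * b 2)
      + (b 0 * c 0 + b 1 * c 1 + b 2 * c 2) ^ 2 = 0 := by
    linear_combination (c₀ * f 0 - (b 1 * c 2 - b 2 * c 1)) * e0 +
      (c₀ * f 1 - (b 2 * c 0 - b 0 * c 2)) * e1 +
      (c₀ * f 2 - (b 0 * c 1 - b 1 * c 0)) * e2 -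
      c₀ ^ 2 * h4 + (b 0 * b 0 + b 1 * b 1 + b 2 * b 2) * h
  nlinarith [key, sq_nonneg c₀, mul_self_nonneg (c 0), mul_self_nonneg (c 1),
    mul_self_nonneg (c 2), mul_self_nonneg (b 0), mul_self_nonneg (b 1),
    mul_self_nonneg (b 2), sq_nonneg (b 0 * c 0 + b 1 * c 1 + b 2 * c 2)]
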